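/- Exact cost difference in Theorem 3: let G be a connected simple graph on a finite vertex type, I ⊆ V the set of IC nodes forming a clique in G, L : V → V → ℝ a link-cost function and Γ ≥ 1 a real weight. Let j and j' be distinct non-IC nodes (j, j' ∉ I), each of degree 1 in G, with unique neighbors i_j ∈ I and i_{j'} ∈ I respectively. Then the cost difference to j of establishing a link to j' is exactly C(j, G+jj') − C(j, G) = L(j, j') − (h_G(j,j') − 1) + (B_{G+jj'}(j) − B_G(j)), where h_G(j,j') = 2 if i_j = i_{j'} and h_G(j,j') = 3 otherwise. -/
import Mathlib


open SimpleGraph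
open scoped Classical

noncomputable def bridging {V : Type*} [Fintype V] (G : SimpleGraph V) (i : V) : ℝ :=
  (G.degree i : ℝ)⁻¹ / ∑ j ∈ G.neighborFinset i, (G.degree j : ℝ)⁻¹

noncomputable def addE {V : Type*} (G : SimpleGraph V) (i k : V) : SimpleGraph V :=
  G ⊔ fromEdgeSet {s(i, k)}

noncomputable def delE {V : Type*} (G : SimpleGraph V) (i k : V) : SimpleGraph V :=
  G.deleteEdges {s(i, k)}

noncomputable def cost {V : Type*} [Fintype V] (G : SimpleGraph V) (I : Set V)
    (L : V → V → ℝ) (Γ : ℝ) (i : V) : ℝ :=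
  (∑ z ∈ G.neighborFinset i, L i z) + Γ * (∑ j ∈ I.toFinset, (G.dist i j : ℝ))
    + (∑ k ∈ Iᶜ.toFinset, (G.dist i k : ℝ)) + bridging G i

lemma addE_adj {V : Type*} (G : SimpleGraph V) (j j' : V) (hjj' : j ≠ j') (a b : V) :
    (addE G j j').Adj a b ↔ G.Adj a b ∨ (a = j ∧ b = j') ∨ (a = j' ∧ b = j) := by
  simp only [addE, sup_adj, fromEdgeSet_adj, Set.mem_singleton_iff, Sym2.eq_iff]
  constructor
  · rintro (h | ⟨(⟨h1, h2⟩ | ⟨h1, h2⟩), hne⟩) <;> tauto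
  · rintro (h | ⟨h1, h2⟩ | ⟨h1, h2⟩)
    · exact Or.inl h
    · exact Or.inr ⟨Or.inl ⟨h1, h2⟩, h1 ▸ h2 ▸ hjj'⟩
    · exact Or.inr ⟨Or.inr ⟨h1, h2⟩, h1 ▸ h2 ▸ hjj'.symm⟩

lemma transfer_of_not_support {V : Type*} {G : SimpleGraph V} {j j' a b : V}
    (hjj' : j ≠ j') (q : (addE G j j').Walk a b) (hjs : j ∉ q.support) :
    ∀ e ∈ q.edges, e ∈ G.edgeSet := by
  intro e he
  induction e using Sym2.ind with
  | _ x y =>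
    have hadj : (addE G j j').Adj x y := q.adj_of_mem_edges he
    rw [addE_adj G j j' hjj'] at hadj
    rcases hadj with h | ⟨h1, h2⟩ | ⟨h1, h2⟩
    · exact h
    · exact absurd (q.fst_mem_support_of_mem_edges (h1 ▸ he)) hjs
    · exact absurd (q.snd_mem_support_of_mem_edges (h2 ▸ he)) hjs

lemma dist_add_pendant {V : Type*} (G : SimpleGraph V) (hG : G.Connected)
    (j j' ij ij' : V) (hjj' : j ≠ j')
    (hadj : G.Adj j ij) (hadj' : G.Adj j' ij')
    (huj : ∀ w, G.Adj j w → w = ij) (huj' : ∀ w, G.Adj j' w → w = ij')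
    (hII : ij = ij' ∨ G.Adj ij ij')
    (x : V) (hx : x ≠ j') :
    (addE G j j').dist j x = G.dist j x := by
  have hle : (addE G j j').dist j x ≤ G.dist j x :=
    (hG.preconnected j x).dist_anti le_sup_left
  refine le_antisymm hle ?_
  have hreach : (addE G j j').Reachable j x := (hG.mono le_sup_left).preconnected j x
  obtain ⟨p, hpath, hlen⟩ := hreach.exists_path_of_dist
  rw [← hlen]
  cases p with
  | nil => simp
  | cons h q =>
    rename_i w
    have hjq : j ∉ q.support := ((SimpleGraph.Walk.cons_isPath_iff h q).mp hpath).2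
    have hq : ∀ e ∈ q.edges, e ∈ G.edgeSet := transfer_of_not_support hjj' q hjq
    rw [addE_adj G j j' hjj'] at h
    rcases h with h | ⟨_, h2⟩ | ⟨h1, _⟩
    · -- first step in G, w = ij
      have hw : w = ij := huj w h
      subst hw
      rw [SimpleGraph.Walk.length_cons]
      have := SimpleGraph.dist_le (SimpleGraph.Walk.cons hadj (q.transfer G hq))
      simpa [SimpleGraph.Walk.length_transfer] using this
    · -- first step is edge j-j', w = j'
      subst h2
      rw [SimpleGraph.Walk.length_cons]
      have hql : (q.transfer G hq).length = q.length := q.length_transfer hq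
      cases hq2 : q.transfer G hq with
      | nil => exact absurd rfl hx
      | cons h2 r =>
        rename_i w2
        have hw2 : w2 = ij' := huj' w2 h2
        subst hw2
        rw [hq2] at hql
        simp only [SimpleGraph.Walk.length_cons] at hql
        rcases hII with hII | hII
        · subst hII
          have := SimpleGraph.dist_le (SimpleGraph.Walk.cons hadj r)
          simp only [SimpleGraph.Walk.length_cons] at this
          omega
        · have := SimpleGraph.dist_le
            (SimpleGraph.Walk.cons hadj (SimpleGraph.Walk.cons hII r))
          simp only [SimpleGraph.Walk.length_cons] at this
          omega
    · exact absurd h1 hjj'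


theorem stmt9 {V : Type*} [Fintype V] (G : SimpleGraph V) (hG : G.Connected)
    (I : Set V) (hclique : ∀ a ∈ I, ∀ b ∈ I, a ≠ b → G.Adj a b)
    (L : V → V → ℝ) (Γ : ℝ) (hΓ : 1 ≤ Γ)
    (j j' ij ij' : V) (hjj' : j ≠ j') (hj : j ∉ I) (hj' : j' ∉ I)
    (hij : ij ∈ I) (hij' : ij' ∈ I)
    (hdegj : G.degree j = 1) (hnbrj : G.neighborSet j = {ij})
    (hdegj' : G.degree j' = 1) (hnbrj' : G.neighborSet j' = {ij'}) :
    cost (addE G j j') I L Γ j - cost G I L Γ j =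
      L j j' - ((G.dist j j' : ℝ) - 1) +
        (bridging (addE G j j') j - bridging G j) ∧
    (ij = ij' → G.dist j j' = 2) ∧ (ij ≠ ij' → G.dist j j' = 3) := by
  have hadjjij : G.Adj j ij := by
    have : ij ∈ G.neighborSet j := by rw [hnbrj]; exact rfl
    exact this
  have hadj'ij' : G.Adj j' ij' := by
    have : ij' ∈ G.neighborSet j' := by rw [hnbrj']; exact rfl
    exact this
  have huj : ∀ w, G.Adj j w → w = ij := by
    intro w hw
    have : w ∈ G.neighborSet j := hw
    rwa [hnbrj] at this
  have huj' : ∀ w, G.Adj j' w → w = ij' := by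
    intro w hw
    have : w ∈ G.neighborSet j' := hw
    rwa [hnbrj'] at this
  have hijnej' : ij ≠ j' := fun h => hj' (h ▸ hij)
  have hij'nej' : ij' ≠ j' := fun h => hj' (h ▸ hij')
  have hnadj : ¬ G.Adj j j' := by
    intro h
    exact hijnej' (huj j' h).symm
  have hII : ij = ij' ∨ G.Adj ij ij' := by
    by_cases h : ij = ij'
    · exact Or.inl h
    · exact Or.inr (hclique ij hij ij' hij' h)
  have hreach : G.Reachable j j' := hG.preconnected j j'
  have h0 : G.dist j j' ≠ 0 := by
    rw [SimpleGraph.dist_ne_zero_iff_ne_and_reachable]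
    exact ⟨hjj', hreach⟩
  have h1 : G.dist j j' ≠ 1 := by
    intro h
    exact hnadj (SimpleGraph.dist_eq_one_iff_adj.mp h)
  have hd2 : ij = ij' → G.dist j j' = 2 := by
    intro h
    subst h
    have hle := SimpleGraph.dist_le
      (SimpleGraph.Walk.cons hadjjij (SimpleGraph.Walk.cons hadj'ij'.symm SimpleGraph.Walk.nil))
    simp only [SimpleGraph.Walk.length_cons, SimpleGraph.Walk.length_nil] at hle
    omega
  have hd3 : ij ≠ ij' → G.dist j j' = 3 := by
    intro hne
    have hle := SimpleGraph.dist_le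
      (SimpleGraph.Walk.cons hadjjij (SimpleGraph.Walk.cons (hclique ij hij ij' hij' hne)
        (SimpleGraph.Walk.cons hadj'ij'.symm SimpleGraph.Walk.nil)))
    simp only [SimpleGraph.Walk.length_cons, SimpleGraph.Walk.length_nil] at hle
    have h2 : G.dist j j' ≠ 2 := by
      intro h2
      obtain ⟨p, hlen⟩ := hreach.exists_walk_length_eq_dist
      rw [h2] at hlen
      cases p with
      | nil => simp at hlen
      | cons h q =>
        rename_i w
        have hw : w = ij := huj w h
        simp only [SimpleGraph.Walk.length_cons] at hlen
        have hq1 : G.dist ij j' ≤ q.length := hw ▸ SimpleGraph.dist_le q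
        have hij0 : G.dist ij j' ≠ 0 := by
          rw [SimpleGraph.dist_ne_zero_iff_ne_and_reachable]
          exact ⟨hijnej', hG.preconnected ij j'⟩
        have : G.dist ij j' = 1 := by omega
        have hadjijj' := SimpleGraph.dist_eq_one_iff_adj.mp this
        exact hne (huj' ij hadjijj'.symm)
    omega
  refine ⟨?_, hd2, hd3⟩
  have hpres : ∀ x, x ≠ j' → (addE G j j').dist j x = G.dist j x := fun x hx =>
    dist_add_pendant G hG j j' ij ij' hjj' hadjjij hadj'ij' huj huj' hII x hx
  have hdist1 : (addE G j j').dist j j' = 1 := by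
    rw [SimpleGraph.dist_eq_one_iff_adj, addE_adj G j j' hjj']
    exact Or.inr (Or.inl ⟨rfl, rfl⟩)
  have hnf : (addE G j j').neighborFinset j = insert j' (G.neighborFinset j) := by
    ext z
    simp only [SimpleGraph.mem_neighborFinset, addE_adj G j j' hjj', Finset.mem_insert]
    constructor
    · rintro (h | ⟨_, h2⟩ | ⟨h1, _⟩)
      · exact Or.inr h
      · exact Or.inl h2
      · exact absurd h1 hjj'
    · rintro (h | h)
      · subst h; tauto
      · exact Or.inl h
  have hj'notmem : j' ∉ G.neighborFinset j := by
    simp only [SimpleGraph.mem_neighborFinset]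
    exact hnadj
  have hsum1 : ∑ z ∈ (addE G j j').neighborFinset j, L j z =
      (∑ z ∈ G.neighborFinset j, L j z) + L j j' := by
    rw [hnf, Finset.sum_insert hj'notmem]
    ring
  have hsumI : ∑ x ∈ I.toFinset, ((addE G j j').dist j x : ℝ) =
      ∑ x ∈ I.toFinset, (G.dist j x : ℝ) := by
    refine Finset.sum_congr rfl fun x hx => ?_
    rw [hpres x ?_]
    intro h
    rw [Set.mem_toFinset] at hx
    exact hj' (h ▸ hx)
  have hj'mem : j' ∈ Iᶜ.toFinset := by
    rw [Set.mem_toFinset]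
    exact hj'
  have hS : ∑ k ∈ Iᶜ.toFinset, ((addE G j j').dist j k : ℝ) =
      ∑ k ∈ Iᶜ.toFinset, (G.dist j k : ℝ) - (G.dist j j' : ℝ) + 1 := by
    rw [← Finset.sum_erase_add _ _ hj'mem,
      ← Finset.sum_erase_add Iᶜ.toFinset (fun k => ((G.dist j k : ℝ))) hj'mem]
    have herase : ∑ k ∈ Iᶜ.toFinset.erase j', ((addE G j j').dist j k : ℝ) =
        ∑ k ∈ Iᶜ.toFinset.erase j', (G.dist j k : ℝ) :=
      Finset.sum_congr rfl fun k hk => by rw [hpres k (Finset.ne_of_mem_erase hk)]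
    rw [herase, hdist1]
    push_cast
    ring
  simp only [cost, hsum1, hsumI, hS]
  ring
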